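/- arXiv:2112.11671 — 5 statements merged into one kernel-verified Lean document; each statement's English description precedes it below -/
import Mathlib

section
/- Let n, k be positive integers with k dividing n, and let α, β be real numbers. Let E ∈ ℝ^{n×n} be the matrix that, written in k×k block form with square blocks of size n/k, has every diagonal block equal to α·J_{n/k} and every off-diagonal block equal to β·J_{n/k} (J_{n/k} the all-ones (n/k)×(n/k) matrix), minus α·I_n. Then the characteristic polynomial of E equals (X − ((n/k)(α+(k−1)β) − α)) · (X − ((n/k)(α−β) − α))^{k−1} · (X + α)^{n−k}; equivalently, the eigenvalues of E, with multiplicity, are (n/k)(α+(k−1)β) − α (multiplicity 1), (n/k)(α−β) − α (multiplicity k−1), and −α (multiplicity n−k). -/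
open Polynomial Matrix

private lemma eval_charpoly_aux {n : ℕ} (M : Matrix (Fin n) (Fin n) ℝ) (x : ℝ) :
    (M.charpoly).eval x = (x • (1 : Matrix (Fin n) (Fin n) ℝ) - M).det := by
  rw [Matrix.charpoly, ← Polynomial.coe_evalRingHom, RingHom.map_det]
  congr 1
  ext i j
  by_cases h : i = j
  · subst h; simp [Matrix.one_apply]
  · simp [Matrix.charmatrix_apply_ne _ _ _ h, Matrix.one_apply, h]

private lemma det_smul_one_sub_mul_aux {p q : ℕ} (hqp : q ≤ p) {y : ℝ} (hy : y ≠ 0)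
    (B : Matrix (Fin p) (Fin q) ℝ) (C : Matrix (Fin q) (Fin p) ℝ) :
    (y • (1 : Matrix (Fin p) (Fin p) ℝ) - B * C).det =
      y ^ (p - q) * (y • (1 : Matrix (Fin q) (Fin q) ℝ) - C * B).det := by
  have h1 : y • (1 : Matrix (Fin p) (Fin p) ℝ) - B * C
      = y • ((1 : Matrix (Fin p) (Fin p) ℝ) - B * (y⁻¹ • C)) := by
    rw [smul_sub, Matrix.mul_smul, smul_smul, mul_inv_cancel₀ hy, one_smul]
  have h2 : (1 : Matrix (Fin q) (Fin q) ℝ) - (y⁻¹ • C) * B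
      = y⁻¹ • (y • (1 : Matrix (Fin q) (Fin q) ℝ) - C * B) := by
    rw [smul_sub, smul_smul, inv_mul_cancel₀ hy, one_smul, Matrix.smul_mul]
  rw [h1, Matrix.det_smul, Matrix.det_one_sub_mul_comm, h2, Matrix.det_smul]
  simp only [Fintype.card_fin, inv_pow]
  have hyp : y ^ p = y ^ (p - q) * y ^ q := by rw [← pow_add, Nat.sub_add_cancel hqp]
  rw [hyp]
  field_simp

/-- The characteristic polynomial of the expected adjacency matrix of the `k`-block
HSBM (diagonal blocks `α·J_{n/k}`, off-diagonal blocks `β·J_{n/k}`, minus `α·I_n`):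
its eigenvalues are `(n/k)(α+(k-1)β) - α` (once), `(n/k)(α-β) - α` (`k-1` times) and
`-α` (`n-k` times). -/
theorem charpoly_expected_adjacency (n k : ℕ) (hn : 0 < n) (hk : 0 < k) (hkn : k ∣ n)
    (α β : ℝ) :
    (Matrix.of fun i j : Fin n =>
        (if (i : ℕ) / (n / k) = (j : ℕ) / (n / k) then α else β) -
          (if i = j then α else 0)).charpoly =
      (Polynomial.X - Polynomial.C (((n / k : ℕ) : ℝ) * (α + ((k : ℝ) - 1) * β) - α)) *
        (Polynomial.X - Polynomial.C (((n / k : ℕ) : ℝ) * (α - β) - α)) ^ (k - 1) *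
        (Polynomial.X + Polynomial.C α) ^ (n - k) := by
  set m : ℕ := n / k with hm
  have hm0 : 0 < m := Nat.div_pos (Nat.le_of_dvd hn hkn) hk
  have hnm : n = k * m := (Nat.mul_div_cancel' hkn).symm
  have hkn' : k ≤ n := Nat.le_of_dvd hn hkn
  have hdiv : ∀ i : Fin n, (i : ℕ) / m < k := fun i =>
    (Nat.div_lt_iff_lt_mul hm0).2 (hnm ▸ i.2)
  set M0 : Matrix (Fin n) (Fin n) ℝ :=
    Matrix.of (fun i j : Fin n => if (i : ℕ) / m = (j : ℕ) / m then α else β) with hM0def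
  set U : Matrix (Fin n) (Fin k) ℝ :=
    Matrix.of (fun (i : Fin n) (b : Fin k) => if (i : ℕ) / m = (b : ℕ) then (1 : ℝ) else 0)
    with hUdef
  set A : Matrix (Fin k) (Fin k) ℝ :=
    Matrix.of (fun b c : Fin k => if b = c then α else β) with hAdef
  have hU : ∀ (i : Fin n) (b : Fin k),
      U i b = if b = ⟨(i : ℕ) / m, hdiv i⟩ then (1 : ℝ) else 0 := by
    intro i b
    show (if (i : ℕ) / m = (b : ℕ) then (1 : ℝ) else 0) = _
    rcases eq_or_ne b (⟨(i : ℕ) / m, hdiv i⟩ : Fin k) with h | h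
    · subst h; simp
    · rw [if_neg (fun hh => h (Fin.ext hh.symm)), if_neg h]
  have hM0 : M0 = U * (A * Uᵀ) := by
    ext i j
    rw [Matrix.mul_apply]
    simp only [Matrix.mul_apply, Matrix.transpose_apply, hU, ite_mul, one_mul, zero_mul,
      mul_ite, mul_one, mul_zero]
    rw [Finset.sum_ite_eq' Finset.univ (⟨(i : ℕ) / m, hdiv i⟩ : Fin k)]
    simp only [Finset.mem_univ, if_true]
    rw [Finset.sum_ite_eq' Finset.univ (⟨(j : ℕ) / m, hdiv j⟩ : Fin k)]
    simp [hM0def, hAdef, Fin.ext_iff]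
  have hUtU : Uᵀ * U = (m : ℝ) • (1 : Matrix (Fin k) (Fin k) ℝ) := by
    ext b c
    rw [Matrix.mul_apply]
    let e : Fin k × Fin m ≃ Fin n := finProdFinEquiv.trans (finCongr hnm.symm)
    rw [← Equiv.sum_comp e (fun i => Uᵀ b i * U i c)]
    have he : ∀ p : Fin k × Fin m, ((e p : Fin n) : ℕ) / m = (p.1 : ℕ) := by
      intro p
      have h1 : ((e p : Fin n) : ℕ) = (p.2 : ℕ) + m * (p.1 : ℕ) := rfl
      rw [h1, Nat.add_mul_div_left _ _ hm0, Nat.div_eq_of_lt p.2.2, Nat.zero_add]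
    have hsum : ∀ p : Fin k × Fin m, Uᵀ b (e p) * U (e p) c
        = (if p.1 = b then (1:ℝ) else 0) * (if p.1 = c then (1:ℝ) else 0) := by
      intro p
      simp only [Matrix.transpose_apply, hUdef, Matrix.of_apply, he p, Fin.val_eq_val]
    rw [Finset.sum_congr rfl (fun p _ => hsum p), Fintype.sum_prod_type]
    have hconst : ∀ a : Fin k,
        (∑ _r : Fin m, (if a = b then (1:ℝ) else 0) * (if a = c then (1:ℝ) else 0))
        = (m:ℝ) * ((if a = b then (1:ℝ) else 0) * (if a = c then (1:ℝ) else 0)) := by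
      intro a; rw [Finset.sum_const, Finset.card_univ, Fintype.card_fin, nsmul_eq_mul]
    rw [Finset.sum_congr rfl fun a _ => hconst a]
    rw [show (∑ a : Fin k, (m:ℝ) * ((if a = b then (1:ℝ) else 0) * (if a = c then (1:ℝ) else 0)))
        = ∑ a : Fin k, (if a = b then (if a = c then (m:ℝ) else 0) else 0) from
      Finset.sum_congr rfl fun a _ => by
        by_cases h1 : a = b <;> by_cases h2 : a = c <;> simp [h1, h2]]
    rw [Finset.sum_ite_eq' Finset.univ b]
    by_cases hbc : b = c <;> simp [Matrix.smul_apply, Matrix.one_apply, hbc]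
  -- the all-ones column
  set V : Matrix (Fin k) (Fin 1) ℝ := Matrix.of (fun _ _ => (1 : ℝ)) with hVdef
  apply Polynomial.eq_of_infinite_eval_eq
  have hfin : ({-α, (m : ℝ) * (α - β) - α} : Set ℝ).Finite := by
    exact (Set.finite_singleton _).insert _
  refine Set.Infinite.mono ?_ hfin.infinite_compl
  intro x hx
  simp only [Set.mem_compl_iff, Set.mem_insert_iff, Set.mem_singleton_iff, not_or] at hx
  obtain ⟨hx1, hx2⟩ := hx
  have hy : x + α ≠ 0 := fun h => hx1 (by linarith)
  set z : ℝ := x + α - (m : ℝ) * (α - β) with hzdef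
  have hz : z ≠ 0 := fun h => hx2 (by rw [hzdef] at h; linarith)
  show _ = _
  rw [eval_charpoly_aux]
  have hE : x • (1 : Matrix (Fin n) (Fin n) ℝ) -
      (Matrix.of fun i j : Fin n =>
        (if (i : ℕ) / m = (j : ℕ) / m then α else β) - (if i = j then α else 0))
      = (x + α) • (1 : Matrix (Fin n) (Fin n) ℝ) - M0 := by
    ext i j
    by_cases h : i = j <;> simp [hM0def, Matrix.one_apply, h, add_smul]
  rw [hE, hM0, det_smul_one_sub_mul_aux hkn' hy]
  have hstep : (A * Uᵀ) * U = (m : ℝ) • A := by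
    rw [Matrix.mul_assoc, hUtU, Matrix.mul_smul, Matrix.mul_one]
  rw [hstep]
  have hkey : (x + α) • (1 : Matrix (Fin k) (Fin k) ℝ) - (m : ℝ) • A
      = z • (1 : Matrix (Fin k) (Fin k) ℝ) - (((m : ℝ) * β) • V) * Vᵀ := by
    ext b c
    by_cases h : b = c
    · simp [hAdef, hVdef, Matrix.one_apply, h, Matrix.mul_apply, hzdef]; ring
    · simp [hAdef, hVdef, Matrix.one_apply, h, Matrix.mul_apply, hzdef]
  rw [hkey, det_smul_one_sub_mul_aux hk hz]
  have hVV : Vᵀ * (((m : ℝ) * β) • V) = Matrix.of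
      (fun _ _ : Fin 1 => (m : ℝ) * β * (k : ℝ)) := by
    ext u v
    simp [hVdef, Matrix.mul_apply, Finset.sum_const, mul_comm]
  rw [hVV]
  have hdet1 : (z • (1 : Matrix (Fin 1) (Fin 1) ℝ) -
      Matrix.of (fun _ _ : Fin 1 => (m : ℝ) * β * (k : ℝ))).det
      = z - (m : ℝ) * β * (k : ℝ) := by
    rw [Matrix.det_fin_one]
    simp [Matrix.one_apply]
  rw [hdet1]
  simp only [eval_mul, eval_pow, eval_sub, eval_add, eval_X, eval_C]
  rw [hzdef]
  ring
end

section
/- Let A be the adjacency matrix of a random non-uniform hypergraph as in the context with d := Σ_{m=2}^M (m−1)d_m, and let W := A − EA. Let 𝓝 be a finite subset of the unit sphere of ℝⁿ with |𝓝| ≤ 5ⁿ. For a unit vector x, let 𝓛(x) := { (i,j) ∈ {1,…,n}² : |x_i x_j| ≤ √d/n } be the set of light pairs. Then ℙ( sup_{x ∈ 𝓝} | Σ_{(i,j) ∈ 𝓛(x)} W_{ij} x_i x_j | ≤ 5M(M−1)·√d ) ≥ 1 − 2e^{−n}. -/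
open MeasureTheory

/-- The adjacency matrix of the random non-uniform hypergraph with edge indicators `T`. -/
noncomputable def adjMatrix (n M : ℕ) {Ω : Type*} (T : Finset (Fin n) → Ω → Bool) (ω : Ω) :
    Matrix (Fin n) (Fin n) ℝ :=
  Matrix.of fun i j => if i = j then 0 else
    ∑ m ∈ Finset.Icc 2 M, ∑ e ∈ Finset.univ.filter
      (fun e : Finset (Fin n) => e.card = m ∧ i ∈ e ∧ j ∈ e),
        (if T e ω then (1 : ℝ) else 0)

/-- The entrywise expectation of the adjacency matrix, for edge probabilities `p`. -/
noncomputable def expAdj (n M : ℕ) (p : Finset (Fin n) → ℝ) : Matrix (Fin n) (Fin n) ℝ :=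
  Matrix.of fun i j => if i = j then 0 else
    ∑ m ∈ Finset.Icc 2 M, ∑ e ∈ Finset.univ.filter
      (fun e : Finset (Fin n) => e.card = m ∧ i ∈ e ∧ j ∈ e), p e

open ProbabilityTheory Finset Real

/-!
Write the light part of `⟨(A - 𝔼A) x, x⟩` as a sum `∑_e w_e (T_e - p_e)` over the possible
hyperedges, where `w_e` collects the light pairs inside `e`. Each weight is at most
`M(M-1)√d/n` in absolute value and, since a pair lies in `C(n-2, m-2)` edges of size `m`, the
variance `∑_e p_e w_e²` is at most `M(M-1)d/n`. A Chernoff bound at `λ = n / (M(M-1)√d)` then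
bounds the probability of a deviation beyond `5M(M-1)√d` by `2e^{-4n}`, and a union bound over
the `5ⁿ ≤ e^{3n}` points of the net gives `2e^{-n}`.
-/

-- The `0 - p` is the centred indicator `(if false then 1 else 0) - p`, as it appears in the mgf.
theorem bernoulli_mgf_le {p u : ℝ} (hp : 0 ≤ p) (hu : |u| ≤ 1) :
    p * exp (u * (1 - p)) + (1 - p) * exp (u * (0 - p)) ≤ exp (p * u ^ 2) := by
  have htaylor : exp u - 1 - u ≤ u ^ 2 := (abs_le.mp (abs_exp_sub_one_sub_id_le hu)).2
  calc p * exp (u * (1 - p)) + (1 - p) * exp (u * (0 - p))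
      = (1 + p * (exp u - 1)) * exp (-(p * u)) := by
        rw [show u * (1 - p) = u + -(p * u) by ring, show u * (0 - p) = -(p * u) by ring, exp_add]
        ring
    _ ≤ exp (p * (exp u - 1)) * exp (-(p * u)) := by
        gcongr; linarith [add_one_le_exp (p * (exp u - 1))]
    _ ≤ exp (p * u ^ 2) := by
        rw [← exp_add, exp_le_exp]; nlinarith [mul_le_mul_of_nonneg_left htaylor hp]

theorem five_pow_mul_exp_le (n : ℕ) : (5 : ℝ) ^ n * (2 * exp (-(4 * n))) ≤ 2 * exp (-n) := by
  have h5 : (5 : ℝ) ≤ exp 3 := by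
    have := quadratic_le_exp_of_nonneg (show (0 : ℝ) ≤ 3 by norm_num)
    linarith
  calc (5 : ℝ) ^ n * (2 * exp (-(4 * n))) ≤ exp 3 ^ n * (2 * exp (-(4 * n))) := by gcongr
    _ = 2 * exp (-n) := by rw [← exp_nat_mul, mul_left_comm, ← exp_add]; ring_nf

theorem ofReal_one_sub_le_of_measure_compl_le {Ω : Type*} [MeasurableSpace Ω] {μ : Measure Ω}
    [IsProbabilityMeasure μ] {s : Set Ω} {a : ℝ} (ha : 0 ≤ a) (h : μ sᶜ ≤ ENNReal.ofReal a) :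
    ENNReal.ofReal (1 - a) ≤ μ s := by
  rw [ENNReal.ofReal_sub _ ha, ENNReal.ofReal_one, tsub_le_iff_right]
  calc 1 = μ (s ∪ sᶜ) := by simp
    _ ≤ μ s + μ sᶜ := measure_union_le _ _
    _ ≤ μ s + ENNReal.ofReal a := by gcongr

theorem integrable_comp_bool {Ω : Type*} [MeasurableSpace Ω] {μ : Measure Ω} [IsFiniteMeasure μ]
    {T : Ω → Bool} (hT : Measurable T) (f : Bool → ℝ) : Integrable (fun ω => f (T ω)) μ :=
  Integrable.comp_measurable Integrable.of_finite hT

section Bernoulli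

variable {Ω : Type*} [MeasurableSpace Ω] {μ : Measure Ω} [IsProbabilityMeasure μ]
  {T : Ω → Bool} {p : ℝ}

theorem integral_comp_bool (hT : Measurable T) (hp : 0 ≤ p)
    (hpT : μ {ω | T ω = true} = ENNReal.ofReal p) (f : Bool → ℝ) :
    ∫ ω, f (T ω) ∂μ = p * f true + (1 - p) * f false := by
  have hs : MeasurableSet {ω | T ω = true} := hT (measurableSet_singleton true)
  have hf : (fun ω => f (T ω))
      = fun ω => {ω | T ω = true}.indicator (fun _ => f true - f false) ω + f false := by
    ext ω; cases h : T ω <;> simp [h]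
  rw [hf, integral_add ((integrable_const _).indicator hs) (integrable_const _),
    integral_indicator_const _ hs, integral_const, measureReal_def, hpT,
    ENNReal.toReal_ofReal hp, probReal_univ]
  simp only [smul_eq_mul]
  ring

theorem mgf_centered_bool_le (hT : Measurable T) (hp : 0 ≤ p)
    (hpT : μ {ω | T ω = true} = ENNReal.ofReal p) {w t : ℝ} (hwt : |t * w| ≤ 1) :
    mgf (fun ω => w * ((if T ω then 1 else 0) - p)) μ t ≤ exp (p * (t * w) ^ 2) := by
  have := integral_comp_bool hT hp hpT (fun b => exp (t * (w * ((if b then 1 else 0) - p))))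
  rw [mgf, this]
  simp only [if_true, Bool.false_eq_true, if_false, ← mul_assoc]
  exact bernoulli_mgf_le hp hwt

end Bernoulli

section Chernoff

variable {Ω ι : Type*} [MeasurableSpace Ω] {μ : Measure Ω} [IsProbabilityMeasure μ]
  {T : ι → Ω → Bool} {p : ι → ℝ}

theorem measure_ge_sum_centered_bool_le (hT : ∀ e, Measurable (T e)) (hindep : iIndepFun T μ)
    (hp : ∀ e, 0 ≤ p e) (hpT : ∀ e, μ {ω | T e ω = true} = ENNReal.ofReal (p e))
    (s : Finset ι) {w : ι → ℝ} {b σ2 : ℝ} (hb : 0 < b) (hw : ∀ e ∈ s, |w e| ≤ b)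
    (hσ : ∑ e ∈ s, p e * w e ^ 2 ≤ σ2) (t : ℝ) :
    μ {ω | t ≤ ∑ e ∈ s, w e * ((if T e ω then 1 else 0) - p e)}
      ≤ ENNReal.ofReal (exp (-(t / b) + σ2 / b ^ 2)) := by
  set X : ι → Ω → ℝ := fun e ω => w e * ((if T e ω then 1 else 0) - p e)
  have hX : ∀ e, Measurable (X e) := fun e =>
    (measurable_from_top (f := fun c : Bool => w e * ((if c then 1 else 0) - p e))).comp (hT e)
  have hXindep : iIndepFun X μ :=
    hindep.comp (fun e c => w e * ((if c then 1 else 0) - p e)) fun _ => measurable_from_top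
  have hint : Integrable (fun ω => exp (b⁻¹ * (∑ e ∈ s, X e) ω)) μ :=
    hXindep.integrable_exp_mul_sum hX fun e _ =>
      integrable_comp_bool (hT e) fun c => exp (b⁻¹ * (w e * ((if c then 1 else 0) - p e)))
  have hmgf : ∀ e ∈ s, mgf (X e) μ b⁻¹ ≤ exp (p e * (b⁻¹ * w e) ^ 2) := fun e he =>
    mgf_centered_bool_le (hT e) (hp e) (hpT e) <| by
      rw [abs_mul, abs_inv, abs_of_pos hb, inv_mul_le_one₀ hb]; exact hw e he
  have hvar : ∑ e ∈ s, p e * (b⁻¹ * w e) ^ 2 ≤ σ2 / b ^ 2 := by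
    simp_rw [mul_pow, ← mul_assoc, mul_comm _ ((b⁻¹) ^ 2), mul_assoc, ← mul_sum]
    rw [div_eq_inv_mul, inv_pow]
    gcongr
  have hset : {ω | t ≤ ∑ e ∈ s, w e * ((if T e ω then 1 else 0) - p e)}
      = {ω | t ≤ (∑ e ∈ s, X e) ω} := by simp [X, Finset.sum_apply]
  rw [hset, ← ENNReal.ofReal_toReal (measure_ne_top μ _)]
  refine ENNReal.ofReal_le_ofReal ?_
  calc μ.real {ω | t ≤ (∑ e ∈ s, X e) ω}
      ≤ exp (-b⁻¹ * t) * mgf (∑ e ∈ s, X e) μ b⁻¹ :=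
        measure_ge_le_exp_mul_mgf t (by positivity) hint
    _ ≤ exp (-b⁻¹ * t) * ∏ e ∈ s, exp (p e * (b⁻¹ * w e) ^ 2) := by
        rw [hXindep.mgf_sum hX]
        gcongr with e he
        exacts [fun e _ => mgf_nonneg, hmgf e he]
    _ ≤ exp (-(t / b) + σ2 / b ^ 2) := by
        rw [← exp_sum, ← exp_add, exp_le_exp]
        linarith [show -b⁻¹ * t = -(t / b) by ring]

theorem measure_ge_abs_sum_centered_bool_le (hT : ∀ e, Measurable (T e))
    (hindep : iIndepFun T μ) (hp : ∀ e, 0 ≤ p e)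
    (hpT : ∀ e, μ {ω | T e ω = true} = ENNReal.ofReal (p e))
    (s : Finset ι) {w : ι → ℝ} {b σ2 : ℝ} (hb : 0 < b) (hw : ∀ e ∈ s, |w e| ≤ b)
    (hσ : ∑ e ∈ s, p e * w e ^ 2 ≤ σ2) (t : ℝ) :
    μ {ω | t ≤ |∑ e ∈ s, w e * ((if T e ω then 1 else 0) - p e)|}
      ≤ ENNReal.ofReal (2 * exp (-(t / b) + σ2 / b ^ 2)) := by
  have hupper := measure_ge_sum_centered_bool_le hT hindep hp hpT s hb hw hσ t
  have hlower := measure_ge_sum_centered_bool_le hT hindep hp hpT s (w := fun e => -w e) hb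
    (by simpa only [abs_neg]) (by simpa only [neg_sq]) t
  simp only [neg_mul, sum_neg_distrib] at hlower
  calc μ {ω | t ≤ |∑ e ∈ s, w e * ((if T e ω then 1 else 0) - p e)|}
      ≤ μ ({ω | t ≤ ∑ e ∈ s, w e * ((if T e ω then 1 else 0) - p e)} ∪
          {ω | t ≤ -∑ e ∈ s, w e * ((if T e ω then 1 else 0) - p e)}) :=
        measure_mono fun ω (hω : t ≤ |_|) => le_abs.mp hω
    _ ≤ _ := (measure_union_le _ _).trans (add_le_add hupper hlower)
    _ = _ := by rw [two_mul, ENNReal.ofReal_add (by positivity) (by positivity)]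

end Chernoff

section Counting

variable {α : Type*} [Fintype α] [DecidableEq α]

theorem card_filter_card_eq_superset (s : Finset α) {m : ℕ} (hm : #s ≤ m) :
    #{e : Finset α | #e = m ∧ s ⊆ e} = (Fintype.card α - #s).choose (m - #s) := by
  rw [← card_compl, ← card_powersetCard]
  refine card_nbij' (· \ s) (· ∪ s) ?_ ?_ ?_ ?_
  · intro e he
    simp only [mem_coe, mem_filter, mem_univ, true_and] at he
    simp only [mem_coe, mem_powersetCard]
    exact ⟨fun a ha => by simp_all, by rw [card_sdiff_of_subset he.2, he.1]⟩
  · intro f hf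
    simp only [mem_coe, mem_powersetCard] at hf
    have hdisj : Disjoint f s := by
      simpa using (subset_compl_iff_disjoint_right).mp hf.1
    simp only [mem_coe, mem_filter, mem_univ, true_and]
    exact ⟨by rw [card_union_of_disjoint hdisj, hf.2]; omega, subset_union_right⟩
  · intro e he
    simp only [mem_coe, mem_filter, mem_univ, true_and] at he
    exact sdiff_union_of_subset he.2
  · intro f hf
    simp only [mem_coe, mem_powersetCard] at hf
    exact union_sdiff_cancel_right (subset_compl_iff_disjoint_right.mp hf.1)

theorem sum_card_eq_sum_offDiag {β : Type*} [AddCommMonoid β] {m : ℕ} (hm : 2 ≤ m)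
    (f : α × α → β) :
    ∑ e : Finset α with #e = m, ∑ q ∈ e.offDiag, f q
      = (Fintype.card α - 2).choose (m - 2) • ∑ q ∈ (univ : Finset α).offDiag, f q := by
  rw [sum_comm' (t' := univ.offDiag) (s' := fun q => {e : Finset α | #e = m ∧ {q.1, q.2} ⊆ e})
    (by intro e q; simp only [mem_filter, mem_univ, true_and, mem_offDiag, insert_subset_iff,
      singleton_subset_iff]; tauto), smul_sum]
  refine sum_congr rfl fun q hq => ?_
  have hpair : #{q.1, q.2} = 2 := card_pair (mem_offDiag.mp hq).2.2
  rw [sum_const, card_filter_card_eq_superset _ (hpair ▸ hm), hpair]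

end Counting

theorem mul_choose_le (n : ℕ) {m : ℕ} (hm : 2 ≤ m) :
    n * (n - 2).choose (m - 2) ≤ (m - 1) * n.choose (m - 1) := by
  obtain ⟨k, rfl⟩ := Nat.exists_eq_add_of_le hm
  rcases n with _ | n
  · simp
  calc (n + 1) * (n + 1 - 2).choose (2 + k - 2)
      ≤ (n + 1) * n.choose k := by
        rw [show 2 + k - 2 = k by omega]; gcongr; omega
    _ = (2 + k - 1) * (n + 1).choose (2 + k - 1) := by
        rw [Nat.add_one_mul_choose_eq, show 2 + k - 1 = k + 1 by omega, mul_comm]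

theorem choose_div_choose_le (n : ℕ) {m : ℕ} (hm : 2 ≤ m) :
    ((n - 2).choose (m - 2) : ℝ) / n.choose (m - 1) ≤ ((m : ℝ) - 1) / n := by
  rcases (Nat.zero_le (n.choose (m - 1))).eq_or_lt with hC | hC
  · rw [← hC, Nat.cast_zero, div_zero]
    exact div_nonneg (by linarith [show (2 : ℝ) ≤ m by exact_mod_cast hm]) n.cast_nonneg
  have hn : 0 < n := by
    by_contra h
    simp_all [Nat.choose_eq_zero_of_lt (show 0 < m - 1 by omega)]
  rw [div_le_div_iff₀ (by exact_mod_cast hC) (by exact_mod_cast hn)]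
  have := mul_choose_le n hm
  rw [← Nat.cast_le (α := ℝ)] at this
  push_cast [Nat.cast_sub (show 1 ≤ m by omega)] at this
  linarith

theorem sum_Icc_sum_filter_card_eq {α β : Type*} [Fintype α] [AddCommMonoid β] (a b : ℕ)
    (P : Finset α → Prop) [DecidablePred P] (f : Finset α → β) :
    ∑ m ∈ Icc a b, ∑ e : Finset α with #e = m ∧ P e, f e
      = ∑ e : Finset α with #e ∈ Icc a b ∧ P e, f e := by
  simp only [sum_filter, ite_and]
  rw [sum_comm]
  simp only [sum_ite_eq]

theorem sum_offDiag_mul_sq_le {α : Type*} [Fintype α] [DecidableEq α] (x : α → ℝ) :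
    ∑ q ∈ (univ : Finset α).offDiag, (x q.1 * x q.2) ^ 2 ≤ (∑ i, x i ^ 2) ^ 2 :=
  calc ∑ q ∈ (univ : Finset α).offDiag, (x q.1 * x q.2) ^ 2
      ≤ ∑ q : α × α, (x q.1 * x q.2) ^ 2 :=
        sum_le_sum_of_subset_of_nonneg (subset_univ _) fun _ _ _ => sq_nonneg _
    _ = (∑ i, x i ^ 2) ^ 2 := by
        rw [Fintype.sum_prod_type, sq, sum_mul_sum]; simp only [mul_pow]

theorem natCast_mul_sub_one_nonneg (M : ℕ) : 0 ≤ (M : ℝ) * (M - 1) := by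
  rcases M with _ | M
  · simp
  · push_cast; nlinarith

theorem card_offDiag_le {α : Type*} [DecidableEq α] {e : Finset α} {M : ℕ} (he : #e ≤ M) :
    (#e.offDiag : ℝ) ≤ M * (M - 1) := by
  rw [offDiag_card, Nat.cast_sub (Nat.le_mul_self _)]
  have hk : (#e : ℝ) ≤ M := by exact_mod_cast he
  rcases M.eq_zero_or_pos with rfl | hM
  · simp_all
  · have : (1 : ℝ) ≤ M := by exact_mod_cast hM
    push_cast
    nlinarith

section LightWeight

variable {α : Type*}

noncomputable def lightWeight (x : α → ℝ) (r : ℝ) (e : Finset α) : ℝ :=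
  ∑ q ∈ e.offDiag with |x q.1 * x q.2| ≤ r, x q.1 * x q.2

theorem abs_lightWeight_le (x : α → ℝ) {r : ℝ} (hr : 0 ≤ r) (e : Finset α) :
    |lightWeight x r e| ≤ #e.offDiag * r :=
  calc |lightWeight x r e| ≤ ∑ q ∈ e.offDiag with |x q.1 * x q.2| ≤ r, |x q.1 * x q.2| :=
        abs_sum_le_sum_abs _ _
    _ ≤ #{q ∈ e.offDiag | |x q.1 * x q.2| ≤ r} • r :=
        sum_le_card_nsmul _ _ _ fun q hq => (mem_filter.mp hq).2
    _ ≤ #e.offDiag * r := by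
        rw [nsmul_eq_mul]; gcongr; exact filter_subset _ _

theorem lightWeight_sq_le (x : α → ℝ) (r : ℝ) (e : Finset α) :
    lightWeight x r e ^ 2 ≤ #e.offDiag * ∑ q ∈ e.offDiag, (x q.1 * x q.2) ^ 2 :=
  calc lightWeight x r e ^ 2
      ≤ #{q ∈ e.offDiag | |x q.1 * x q.2| ≤ r} *
          ∑ q ∈ e.offDiag with |x q.1 * x q.2| ≤ r, (x q.1 * x q.2) ^ 2 :=
        sq_sum_le_card_mul_sum_sq
    _ ≤ _ := by gcongr <;> exact filter_subset _ _

theorem sum_filter_abs_mul_le_zero_eq_zero [Fintype α] (x : α → ℝ) (f : α × α → ℝ) :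
    ∑ q ∈ univ.filter (fun q : α × α => |x q.1 * x q.2| ≤ 0), f q * x q.1 * x q.2 = 0 :=
  sum_eq_zero fun q hq => by
    rw [mul_assoc, abs_nonpos_iff.mp (mem_filter.mp hq).2, mul_zero]

end LightWeight

section Hypergraph

variable {n M : ℕ}

def hyperedges (n M : ℕ) : Finset (Finset (Fin n)) := {e | #e ∈ Icc 2 M}

/-- The paper's `d`. -/
noncomputable def degreeBound (M : ℕ) (dm : ℕ → ℝ) : ℝ := ∑ m ∈ Icc 2 M, ((m : ℝ) - 1) * dm m

theorem two_le_of_degreeBound_pos {dm : ℕ → ℝ} (hd : 0 < degreeBound M dm) : 2 ≤ M := by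
  by_contra hM
  rw [degreeBound, Icc_eq_empty hM, sum_empty] at hd
  exact hd.false

theorem adjMatrix_sub_expAdj_apply {Ω : Type*} (T : Finset (Fin n) → Ω → Bool)
    (p : Finset (Fin n) → ℝ) (ω : Ω) (i j : Fin n) :
    (adjMatrix n M T ω - expAdj n M p) i j
      = ∑ e ∈ hyperedges n M,
          if (i, j) ∈ e.offDiag then (if T e ω then 1 else 0) - p e else 0 := by
  simp only [Matrix.sub_apply, adjMatrix, expAdj, Matrix.of_apply]
  split_ifs with hij
  · simp [hij]
  · rw [← sum_sub_distrib]
    simp_rw [← sum_sub_distrib]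
    rw [sum_Icc_sum_filter_card_eq, hyperedges, ← sum_filter, filter_filter]
    congr 1
    ext e
    simp [hij, and_assoc]

theorem sum_light_mul_eq {Ω : Type*} (T : Finset (Fin n) → Ω → Bool) (p : Finset (Fin n) → ℝ)
    (ω : Ω) (x : Fin n → ℝ) (r : ℝ) :
    ∑ q ∈ univ.filter (fun q : Fin n × Fin n => |x q.1 * x q.2| ≤ r),
        (adjMatrix n M T ω - expAdj n M p) q.1 q.2 * x q.1 * x q.2
      = ∑ e ∈ hyperedges n M, lightWeight x r e * ((if T e ω then 1 else 0) - p e) := by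
  simp only [adjMatrix_sub_expAdj_apply, sum_mul]
  rw [sum_comm]
  refine sum_congr rfl fun e _ => ?_
  rw [lightWeight, sum_mul]
  simp only [ite_mul, zero_mul, ← sum_filter, filter_filter]
  exact sum_congr (by ext q; simp only [mem_filter, mem_univ, true_and]; tauto) fun _ _ => by ring

end Hypergraph

section Variance

variable {n M : ℕ} {p : Finset (Fin n) → ℝ}

theorem sum_card_eq_mul_sum_offDiag_sq_le {m : ℕ} (hm : 2 ≤ m) {c : ℝ}
    (hc : 0 ≤ c) (hpm : ∀ e : Finset (Fin n), #e = m → p e ≤ c / n.choose (m - 1))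
    {x : Fin n → ℝ} (hx : ∑ i, x i ^ 2 = 1) :
    ∑ e : Finset (Fin n) with #e = m, p e * ∑ q ∈ e.offDiag, (x q.1 * x q.2) ^ 2
      ≤ (m - 1) * c / n := by
  have hoff : ∑ q ∈ (univ : Finset (Fin n)).offDiag, (x q.1 * x q.2) ^ 2 ≤ 1 := by
    simpa [hx] using sum_offDiag_mul_sq_le x
  calc ∑ e : Finset (Fin n) with #e = m, p e * ∑ q ∈ e.offDiag, (x q.1 * x q.2) ^ 2
      ≤ ∑ e : Finset (Fin n) with #e = m,
          c / n.choose (m - 1) * ∑ q ∈ e.offDiag, (x q.1 * x q.2) ^ 2 :=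
        sum_le_sum fun e he => by gcongr; exact hpm e (mem_filter.mp he).2
    _ = c / n.choose (m - 1) * ((n - 2).choose (m - 2) *
          ∑ q ∈ (univ : Finset (Fin n)).offDiag, (x q.1 * x q.2) ^ 2) := by
        rw [← mul_sum, sum_card_eq_sum_offDiag hm, Fintype.card_fin, nsmul_eq_mul]
    _ ≤ c * ((n - 2).choose (m - 2) / n.choose (m - 1)) := by
        rw [mul_div_assoc', div_mul_eq_mul_div]
        gcongr
        exact mul_le_of_le_one_right (Nat.cast_nonneg _) hoff
    _ ≤ c * ((m - 1) / n) := mul_le_mul_of_nonneg_left (choose_div_choose_le n hm) hc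
    _ = (m - 1) * c / n := by ring

theorem sum_mul_lightWeight_sq_le (hp : ∀ e, 0 ≤ p e) {dm : ℕ → ℝ} (hdm : ∀ m, 0 ≤ dm m)
    (hpbound : ∀ e : Finset (Fin n), #e ∈ Icc 2 M → p e ≤ dm #e / n.choose (#e - 1))
    {x : Fin n → ℝ} (hx : ∑ i, x i ^ 2 = 1) (r : ℝ) :
    ∑ e ∈ hyperedges n M, p e * lightWeight x r e ^ 2 ≤ M * (M - 1) * (degreeBound M dm / n) :=
  calc ∑ e ∈ hyperedges n M, p e * lightWeight x r e ^ 2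
      ≤ ∑ e ∈ hyperedges n M, M * (M - 1) * (p e * ∑ q ∈ e.offDiag, (x q.1 * x q.2) ^ 2) :=
        sum_le_sum fun e he => by
          have hcard := card_offDiag_le (mem_Icc.mp (mem_filter.mp he).2).2
          calc p e * lightWeight x r e ^ 2
              ≤ p e * (#e.offDiag * ∑ q ∈ e.offDiag, (x q.1 * x q.2) ^ 2) := by
                gcongr; exacts [hp e, lightWeight_sq_le x r e]
            _ ≤ _ := by
                rw [mul_left_comm]
                exact mul_le_mul_of_nonneg_right hcard
                  (mul_nonneg (hp e) (sum_nonneg fun _ _ => sq_nonneg _))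
    _ = M * (M - 1) * ∑ m ∈ Icc 2 M, ∑ e : Finset (Fin n) with #e = m,
          p e * ∑ q ∈ e.offDiag, (x q.1 * x q.2) ^ 2 := by
        rw [← mul_sum, hyperedges]
        simpa only [and_true] using
          congrArg _ (sum_Icc_sum_filter_card_eq 2 M (fun _ => True) _).symm
    _ ≤ M * (M - 1) * ∑ m ∈ Icc 2 M, (m - 1) * dm m / n := by
        gcongr with m hm
        · exact natCast_mul_sub_one_nonneg M
        · refine sum_card_eq_mul_sum_offDiag_sq_le (mem_Icc.mp hm).1 (hdm m) (fun e he => ?_) hx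
          simpa only [he] using hpbound e (he ▸ hm)
    _ = M * (M - 1) * (degreeBound M dm / n) := by rw [degreeBound, sum_div]

end Variance

theorem measure_lt_abs_sum_light_le {Ω : Type*} [MeasurableSpace Ω] {μ : Measure Ω}
    [IsProbabilityMeasure μ] {n M : ℕ} {T : Finset (Fin n) → Ω → Bool}
    (hT : ∀ e, Measurable (T e)) (hindep : iIndepFun T μ) {p : Finset (Fin n) → ℝ}
    (hp : ∀ e, 0 ≤ p e) (hpT : ∀ e, μ {ω | T e ω = true} = ENNReal.ofReal (p e))
    {dm : ℕ → ℝ} (hdm : ∀ m, 0 ≤ dm m)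
    (hpbound : ∀ e : Finset (Fin n), #e ∈ Icc 2 M → p e ≤ dm #e / n.choose (#e - 1))
    (hn : 0 < n) (hd : 0 < degreeBound M dm) {x : Fin n → ℝ} (hx : ∑ i, x i ^ 2 = 1) :
    μ {ω | 5 * M * ((M : ℝ) - 1) * √(degreeBound M dm) <
        |∑ q ∈ univ.filter (fun q : Fin n × Fin n => |x q.1 * x q.2| ≤ √(degreeBound M dm) / n),
          (adjMatrix n M T ω - expAdj n M p) q.1 q.2 * x q.1 * x q.2|}
      ≤ ENNReal.ofReal (2 * exp (-(4 * n))) := by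
  set d := degreeBound M dm
  have hM : (2 : ℝ) ≤ M := by exact_mod_cast two_le_of_degreeBound_pos hd
  have hK : 1 ≤ (M : ℝ) * (M - 1) := by nlinarith
  have hr : 0 < √d / n := by positivity
  have hb : 0 < M * ((M : ℝ) - 1) * (√d / n) := by positivity
  simp_rw [sum_light_mul_eq]
  refine (measure_mono (Set.ofPred_subset_ofPred.mpr fun _ => le_of_lt)).trans <|
    (measure_ge_abs_sum_centered_bool_le hT hindep hp hpT _ hb
      (fun e he => (abs_lightWeight_le x hr.le e).trans ?_)
      (sum_mul_lightWeight_sq_le hp hdm hpbound hx _) _).trans ?_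
  · gcongr
    exact card_offDiag_le (mem_Icc.mp (mem_filter.mp he).2).2
  have hmean : 5 * M * ((M : ℝ) - 1) * √d / (M * (M - 1) * (√d / n)) = 5 * n := by
    have : (M : ℝ) - 1 ≠ 0 := by linarith
    field_simp
  have hvar : M * ((M : ℝ) - 1) * (d / n) / (M * (M - 1) * (√d / n)) ^ 2 = n / (M * (M - 1)) := by
    rw [mul_pow, div_pow, sq_sqrt hd.le]
    field_simp
  gcongr
  rw [hmean, hvar]
  linarith [div_le_self n.cast_nonneg hK]

theorem light_pairs_contribution_general
    {Ω : Type*} [MeasurableSpace Ω] (μ : Measure Ω) [IsProbabilityMeasure μ]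
    (n M : ℕ)
    (T : Finset (Fin n) → Ω → Bool) (hTmeas : ∀ e, Measurable (T e))
    (hTindep : ProbabilityTheory.iIndepFun T μ)
    (p : Finset (Fin n) → ℝ) (hp0 : ∀ e, 0 ≤ p e)
    (hpT : ∀ e, μ {ω | T e ω = true} = ENNReal.ofReal (p e))
    (dm : ℕ → ℝ) (hdm : ∀ m, 0 ≤ dm m)
    (hpbound : ∀ e : Finset (Fin n), e.card ∈ Finset.Icc 2 M →
      p e ≤ dm e.card / (n.choose (e.card - 1)))
    (𝓝 : Finset (Fin n → ℝ)) (h𝓝card : 𝓝.card ≤ 5 ^ n)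
    (h𝓝unit : ∀ x ∈ 𝓝, ∑ i, (x i) ^ 2 = 1) :
    ENNReal.ofReal (1 - 2 * Real.exp (-(n : ℝ))) ≤
      μ {ω | ∀ x ∈ 𝓝,
        |∑ q ∈ Finset.univ.filter (fun q : Fin n × Fin n =>
            |x q.1 * x q.2| ≤
              Real.sqrt (∑ m ∈ Finset.Icc 2 M, ((m : ℝ) - 1) * dm m) / n),
          (adjMatrix n M T ω - expAdj n M p) q.1 q.2 * x q.1 * x q.2| ≤
        5 * M * ((M : ℝ) - 1) *
          Real.sqrt (∑ m ∈ Finset.Icc 2 M, ((m : ℝ) - 1) * dm m)} := by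
  rw [show ∑ m ∈ Icc 2 M, ((m : ℝ) - 1) * dm m = degreeBound M dm from rfl]
  refine ofReal_one_sub_le_of_measure_compl_le (by positivity) ?_
  rcases (show 0 ≤ √(degreeBound M dm) / n by positivity).eq_or_lt with hr | hr
  · have hbound : 0 ≤ 5 * M * ((M : ℝ) - 1) * √(degreeBound M dm) := by
      nlinarith [natCast_mul_sub_one_nonneg M, sqrt_nonneg (degreeBound M dm)]
    simp only [← hr, sum_filter_abs_mul_le_zero_eq_zero, abs_zero, hbound, implies_true,
      Set.ofPred_true, Set.compl_univ, measure_empty, zero_le]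
  have hn : 0 < n := Nat.pos_of_ne_zero fun h => by simp [h] at hr
  have hd : 0 < degreeBound M dm :=
    sqrt_pos.mp ((div_pos_iff_of_pos_right (Nat.cast_pos.mpr hn)).mp hr)
  refine (measure_mono ?_).trans <| (measure_biUnion_finset_le 𝓝 _).trans <|
    (sum_le_sum fun x hx => measure_lt_abs_sum_light_le hTmeas hTindep hp0 hpT hdm hpbound hn hd
      (h𝓝unit x hx)).trans ?_
  · intro ω hω
    simpa using hω
  · rw [← ENNReal.ofReal_sum_of_nonneg fun _ _ => by positivity, sum_const, nsmul_eq_mul]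
    refine ENNReal.ofReal_le_ofReal <| le_trans ?_ (five_pow_mul_exp_le n)
    gcongr
    exact_mod_cast h𝓝card

/-- Contribution of light pairs: with probability at least `1 - 2e^{-n}`, simultaneously
for every unit vector `x` in a net `𝓝` of size at most `5ⁿ`, the light-pair part of
`⟨(A - 𝔼A)x, x⟩` is at most `5M(M-1)·√d`. -/
theorem light_pairs_contribution
    {Ω : Type*} [MeasurableSpace Ω] (μ : Measure Ω) [IsProbabilityMeasure μ]
    (n M : ℕ) (hn : 2 ≤ n) (hM : 2 ≤ M)
    (T : Finset (Fin n) → Ω → Bool) (hTmeas : ∀ e, Measurable (T e))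
    (hTindep : ProbabilityTheory.iIndepFun T μ)
    (p : Finset (Fin n) → ℝ) (hp0 : ∀ e, 0 ≤ p e)
    (hpT : ∀ e, μ {ω | T e ω = true} = ENNReal.ofReal (p e))
    (dm : ℕ → ℝ) (hdm : ∀ m, 0 ≤ dm m)
    (hpbound : ∀ e : Finset (Fin n), e.card ∈ Finset.Icc 2 M →
      p e ≤ dm e.card / (n.choose (e.card - 1)))
    (𝓝 : Finset (Fin n → ℝ)) (h𝓝card : 𝓝.card ≤ 5 ^ n)
    (h𝓝unit : ∀ x ∈ 𝓝, ∑ i, (x i) ^ 2 = 1) :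
    ENNReal.ofReal (1 - 2 * Real.exp (-(n : ℝ))) ≤
      μ {ω | ∀ x ∈ 𝓝,
        |∑ q ∈ Finset.univ.filter (fun q : Fin n × Fin n =>
            |x q.1 * x q.2| ≤
              Real.sqrt (∑ m ∈ Finset.Icc 2 M, ((m : ℝ) - 1) * dm m) / n),
          (adjMatrix n M T ω - expAdj n M p) q.1 q.2 * x q.1 * x q.2| ≤
        5 * M * ((M : ℝ) - 1) *
          Real.sqrt (∑ m ∈ Finset.Icc 2 M, ((m : ℝ) - 1) * dm m)} :=
  light_pairs_contribution_general μ n M T hTmeas hTindep p hp0 hpT dm hdm hpbound 𝓝 h𝓝card h𝓝unit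
end

section
/- Bounded row sums: let A be the adjacency matrix of a random non-uniform hypergraph as in the context, and suppose d := Σ_{m=2}^M (m−1)d_m ≥ c·log n for some constant c > 0. Then for any K > 0, with α₁ := 4 + 2(M−1)(1+K)/(3c), one has ℙ( max_{1 ≤ i ≤ n} Σ_{j=1}^n A_{ij} ≤ α₁·d ) ≥ 1 − n^{−K}. -/
/-!
Row `i` of `A` sums to `S_i = ∑_{e ∋ i} (|e| - 1) T_e`, a sum of independent weighted Bernoulli
variables, so the Chernoff bound with `s = 3 / (2(M - 1))` gives
`ℙ(S_i ≥ α₁ d) ≤ exp(-s α₁ d + ∑_{e ∋ i} p_e (e^{s(|e|-1)} - 1))`.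
Convexity of `exp` bounds `e^{s(|e|-1)} - 1` by `(|e| - 1)/(M - 1) · (e^{3/2} - 1)`, and at
most `C(n, m-1)` edges of size `m` contain `i`, so the sum is at most
`(e^{3/2} - 1) d/(M - 1) ≤ 6d/(M - 1)`. As `s α₁ d = 6d/(M - 1) + (1 + K) d/c` and
`d ≥ c log n`, each row sum exceeds `α₁ d` with probability at most `n^{-(1+K)}`, and a union
bound over the `n` rows concludes.
-/

open MeasureTheory

open Finset Real

lemma exp_three_halves_lt_seven : exp (3 / 2) < 7 := by
  have h3 : exp 3 < 49 := by
    rw [show (3 : ℝ) = (3 : ℕ) * 1 by norm_num, exp_nat_mul]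
    calc exp 1 ^ 3 < 2.7182818286 ^ 3 := by gcongr; exact exp_one_lt_d9
      _ < 49 := by norm_num
  have hsq : exp (3 / 2) ^ 2 = exp 3 := by rw [← exp_nat_mul]; norm_num
  nlinarith [exp_pos (3 / 2)]

lemma exp_mul_sub_one_le_of_le {s a b : ℝ} (ha : 0 ≤ a) (hab : a ≤ b) (hb : 0 < b) :
    exp (s * a) - 1 ≤ a / b * (exp (s * b) - 1) := by
  have hθ : a / b ≤ 1 := (div_le_one hb).2 hab
  have key := convexOn_exp.2 (Set.mem_univ (s * b)) (Set.mem_univ 0) (div_nonneg ha hb.le)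
    (sub_nonneg.2 hθ) (add_sub_cancel _ _)
  simp only [smul_eq_mul, mul_zero, add_zero, exp_zero, mul_one] at key
  rw [show a / b * (s * b) = s * a by field_simp] at key
  linarith

namespace ProbabilityTheory

variable {Ω : Type*} [MeasurableSpace Ω] {μ : Measure Ω} [IsProbabilityMeasure μ]

lemma mgf_mul_boolIndicator {Y : Ω → Bool} (hY : Measurable Y) (a t : ℝ) :
    mgf (fun ω => a * (if Y ω then 1 else 0)) μ t
      = 1 + μ.real {ω | Y ω = true} * (exp (t * a) - 1) := by
  have hset : MeasurableSet {ω | Y ω = true} := hY (measurableSet_singleton true)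
  have hexp : (fun ω => exp (t * (a * (if Y ω then 1 else 0))))
      = fun ω => {ω | Y ω = true}.indicator (fun _ => exp (t * a) - 1) ω + 1 := by
    funext ω
    by_cases h : Y ω <;> simp [h]
  rw [mgf, hexp, integral_add ((integrable_const _).indicator hset) (integrable_const 1),
    integral_indicator_const _ hset, integral_const, probReal_univ, smul_eq_mul, smul_eq_mul]
  ring

lemma mgf_mul_boolIndicator_le {Y : Ω → Bool} (hY : Measurable Y) (a t : ℝ) :
    mgf (fun ω => a * (if Y ω then 1 else 0)) μ t
      ≤ exp (μ.real {ω | Y ω = true} * (exp (t * a) - 1)) := by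
  rw [mgf_mul_boolIndicator hY, add_comm]
  exact add_one_le_exp _

variable {ι : Type*} {T : ι → Ω → Bool}

lemma iIndepFun.mgf_sum_mul_boolIndicator_le (hT : ∀ e, Measurable (T e))
    (hindep : iIndepFun T μ) (w : ι → ℝ) (s : Finset ι) (t : ℝ) :
    mgf (fun ω => ∑ e ∈ s, w e * (if T e ω then 1 else 0)) μ t
      ≤ exp (∑ e ∈ s, μ.real {ω | T e ω = true} * (exp (t * w e) - 1)) := by
  set g : ι → Bool → ℝ := fun e b => w e * (if b then 1 else 0)
  have hg : ∀ e, Measurable (g e) := fun _ => Measurable.of_discrete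
  set X : ι → Ω → ℝ := fun e ω => g e (T e ω)
  have hX : ∀ e, Measurable (X e) := fun e => (hg e).comp (hT e)
  have hXindep : iIndepFun X μ := hindep.comp g hg
  calc mgf (fun ω => ∑ e ∈ s, X e ω) μ t = ∏ e ∈ s, mgf (X e) μ t := by
        rw [← hXindep.mgf_sum hX s]; congr with ω; simp
    _ ≤ ∏ e ∈ s, exp (μ.real {ω | T e ω = true} * (exp (t * w e) - 1)) :=
        prod_le_prod (fun _ _ => mgf_nonneg) fun e _ => mgf_mul_boolIndicator_le (hT e) _ _
    _ = _ := (exp_sum _ _).symm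

lemma iIndepFun.measureReal_sum_mul_boolIndicator_ge_le (hT : ∀ e, Measurable (T e))
    (hindep : iIndepFun T μ) (w : ι → ℝ) (s : Finset ι) (x : ℝ) {t : ℝ} (ht : 0 ≤ t) :
    μ.real {ω | x ≤ ∑ e ∈ s, w e * (if T e ω then 1 else 0)}
      ≤ exp (-t * x + ∑ e ∈ s, μ.real {ω | T e ω = true} * (exp (t * w e) - 1)) := by
  have hbound : ∀ ω, ∑ e ∈ s, w e * (if T e ω then 1 else 0) ≤ ∑ e ∈ s, |w e| :=
    fun ω => sum_le_sum fun e _ => by split_ifs <;> simp [le_abs_self, abs_nonneg]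
  have hmeas : Measurable fun ω => ∑ e ∈ s, w e * (if T e ω then 1 else 0) :=
    Finset.measurable_sum s fun e _ =>
      (Measurable.of_discrete (f := fun b : Bool => w e * if b then 1 else 0)).comp (hT e)
  have hint := integrable_exp_mul_of_le (μ := μ) t _ ht hmeas.aemeasurable (ae_of_all _ hbound)
  calc _ ≤ exp (-t * x) * mgf (fun ω => ∑ e ∈ s, w e * (if T e ω then 1 else 0)) μ t :=
        measure_ge_le_exp_mul_mgf x ht hint
    _ ≤ _ := by
        rw [exp_add]
        exact mul_le_mul_of_nonneg_left (hindep.mgf_sum_mul_boolIndicator_le hT w s t)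
          (exp_pos _).le

end ProbabilityTheory

section Incidence

variable {α : Type*} [Fintype α] [DecidableEq α]

def incidentEdges (M : ℕ) (i : α) : Finset (Finset α) :=
  univ.filter fun e => e.card ∈ Icc 2 M ∧ i ∈ e

lemma card_le_choose_of_forall_card_eq_of_mem {F : Finset (Finset α)} {i : α} {m : ℕ}
    (hF : ∀ e ∈ F, e.card = m ∧ i ∈ e) : #F ≤ (Fintype.card α).choose (m - 1) := by
  have hmaps : Set.MapsTo (fun e : Finset α => e.erase i) F
      (powersetCard (m - 1) (univ : Finset α)) := fun e he => by
    simp [card_erase_of_mem (hF e he).2, (hF e he).1]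
  have hinj : Set.InjOn (fun e : Finset α => e.erase i) F := fun e he e' he' h => by
    rw [← insert_erase (hF e he).2, ← insert_erase (hF e' he').2]
    exact congrArg (insert i) h
  simpa using card_le_card_of_injOn _ hmaps hinj

lemma sum_incidentEdges_mul_le (M : ℕ) (i : α) (q : Finset α → ℝ) (dm : ℕ → ℝ)
    (hdm : ∀ m, 0 ≤ dm m)
    (hq : ∀ e ∈ incidentEdges M i, q e ≤ dm e.card / (Fintype.card α).choose (e.card - 1))
    (g : ℕ → ℝ) (hg : ∀ m ∈ Icc 2 M, 0 ≤ g m) :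
    ∑ e ∈ incidentEdges M i, q e * g e.card ≤ ∑ m ∈ Icc 2 M, dm m * g m := by
  have hmaps : ∀ e ∈ incidentEdges M i, e.card ∈ Icc 2 M := fun e he => (mem_filter.1 he).2.1
  rw [← sum_fiberwise_of_maps_to hmaps]
  refine sum_le_sum fun m hm => ?_
  set F := (incidentEdges M i).filter fun e => e.card = m
  have hF : ∀ e ∈ F, e.card = m ∧ i ∈ e := fun e he =>
    ⟨(mem_filter.1 he).2, (mem_filter.1 (mem_filter.1 he).1).2.2⟩
  set N := (Fintype.card α).choose (m - 1)
  have hcard : #F ≤ N := card_le_choose_of_forall_card_eq_of_mem hF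
  calc ∑ e ∈ F, q e * g e.card
        ≤ ∑ _e ∈ F, dm m / N * g m :=
        sum_le_sum fun e he => by
          have hqe := hq e (mem_filter.1 he).1
          rw [(hF e he).1] at hqe ⊢
          exact mul_le_mul_of_nonneg_right hqe (hg m hm)
    _ = #F * (dm m / N) * g m := by
        rw [sum_const, nsmul_eq_mul, mul_assoc]
    _ ≤ dm m * g m := by
        refine mul_le_mul_of_nonneg_right ?_ (hg m hm)
        rcases Nat.eq_zero_or_pos N with hN | hN
        · simp [hN, hdm m]
        · calc (#F : ℝ) * (dm m / N) ≤ N * (dm m / N) := by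
                gcongr; exact div_nonneg (hdm m) (Nat.cast_nonneg _)
            _ = dm m := mul_div_cancel₀ _ (by positivity)

end Incidence

lemma adjMatrix_apply_eq_sum_incidentEdges (n M : ℕ) {Ω : Type*}
    (T : Finset (Fin n) → Ω → Bool) (ω : Ω) (i j : Fin n) :
    adjMatrix n M T ω i j
      = ∑ e ∈ incidentEdges M i, if j ∈ e.erase i then (if T e ω then 1 else 0) else 0 := by
  rw [adjMatrix, Matrix.of_apply]
  split_ifs with hij
  · simp [hij]
  rw [← sum_filter, ← sum_fiberwise_of_maps_to (g := card) (t := Icc 2 M)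
    fun e he => (mem_filter.1 (mem_filter.1 he).1).2.1]
  refine sum_congr rfl fun m _ => sum_congr ?_ fun _ _ => rfl
  ext e
  simp only [incidentEdges, mem_filter, mem_univ, true_and, mem_erase]
  grind

lemma sum_adjMatrix_row (n M : ℕ) {Ω : Type*} (T : Finset (Fin n) → Ω → Bool) (ω : Ω)
    (i : Fin n) :
    ∑ j, adjMatrix n M T ω i j
      = ∑ e ∈ incidentEdges M i, ((e.card : ℝ) - 1) * (if T e ω then 1 else 0) := by
  simp_rw [adjMatrix_apply_eq_sum_incidentEdges]
  rw [sum_comm]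
  refine sum_congr rfl fun e he => ?_
  have h1 : 1 ≤ e.card := one_le_two.trans (mem_Icc.1 (mem_filter.1 he).2.1).1
  rw [sum_ite_mem, univ_inter, sum_const, card_erase_of_mem (mem_filter.1 he).2.2, nsmul_eq_mul,
    Nat.cast_sub h1, Nat.cast_one]

lemma sum_incidentEdges_mul_exp_sub_one_le {α : Type*} [Fintype α] [DecidableEq α] (M : ℕ)
    (i : α) (q : Finset α → ℝ) (dm : ℕ → ℝ) (hdm : ∀ m, 0 ≤ dm m)
    (hq : ∀ e ∈ incidentEdges M i, q e ≤ dm e.card / (Fintype.card α).choose (e.card - 1))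
    {s : ℝ} (hs : 0 ≤ s) :
    ∑ e ∈ incidentEdges M i, q e * (exp (s * ((e.card : ℝ) - 1)) - 1)
      ≤ (exp (s * ((M : ℝ) - 1)) - 1) / ((M : ℝ) - 1)
          * ∑ m ∈ Icc 2 M, ((m : ℝ) - 1) * dm m := by
  have hrange : ∀ m ∈ Icc 2 M, 1 ≤ (m : ℝ) - 1 ∧ (m : ℝ) - 1 ≤ (M : ℝ) - 1 := by
    intro m hm
    have h2 : (2 : ℝ) ≤ m := by exact_mod_cast (mem_Icc.1 hm).1
    have hM : (m : ℝ) ≤ M := by exact_mod_cast (mem_Icc.1 hm).2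
    exact ⟨by linarith, by linarith⟩
  refine (sum_incidentEdges_mul_le M i q dm hdm hq (fun m => exp (s * ((m : ℝ) - 1)) - 1)
    fun m hm => sub_nonneg.2 (one_le_exp (mul_nonneg hs (by linarith [hrange m hm])))).trans ?_
  rw [mul_sum]
  refine sum_le_sum fun m hm => ?_
  obtain ⟨hm1, hmM⟩ := hrange m hm
  calc dm m * (exp (s * ((m : ℝ) - 1)) - 1)
      ≤ dm m * (((m : ℝ) - 1) / ((M : ℝ) - 1) * (exp (s * ((M : ℝ) - 1)) - 1)) :=
        mul_le_mul_of_nonneg_left (exp_mul_sub_one_le_of_le (by linarith) hmM (by linarith)) (hdm m)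
    _ = _ := by ring

lemma ProbabilityTheory.iIndepFun.measureReal_sum_incidentEdges_ge_le {Ω α : Type*}
    [MeasurableSpace Ω] {μ : Measure Ω} [IsProbabilityMeasure μ] [Fintype α] [DecidableEq α]
    {T : Finset α → Ω → Bool} (hT : ∀ e, Measurable (T e)) (hindep : iIndepFun T μ)
    (M : ℕ) (i : α) (dm : ℕ → ℝ) (hdm : ∀ m, 0 ≤ dm m)
    (hq : ∀ e ∈ incidentEdges M i,
      μ.real {ω | T e ω = true} ≤ dm e.card / (Fintype.card α).choose (e.card - 1))
    (x : ℝ) {s : ℝ} (hs : 0 ≤ s) :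
    μ.real {ω | x ≤ ∑ e ∈ incidentEdges M i, ((e.card : ℝ) - 1) * if T e ω then 1 else 0}
      ≤ exp (-s * x + (exp (s * ((M : ℝ) - 1)) - 1) / ((M : ℝ) - 1)
          * ∑ m ∈ Icc 2 M, ((m : ℝ) - 1) * dm m) := by
  refine (hindep.measureReal_sum_mul_boolIndicator_ge_le hT _ _ x hs).trans ?_
  gcongr
  exact sum_incidentEdges_mul_exp_sub_one_le M i _ dm hdm hq hs

lemma chernoff_exponent_le {b c K L d : ℝ} (hb : 0 < b) (hc : 0 < c) (hK : 0 ≤ 1 + K)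
    (hd : c * L ≤ d) (hd0 : 0 ≤ d) :
    -(3 / (2 * b)) * ((4 + 2 * b * (1 + K) / (3 * c)) * d) + (exp (3 / 2) - 1) / b * d
      ≤ -((1 + K) * L) := by
  have hexp : (exp (3 / 2) - 1) / b * d ≤ 6 / b * d := by
    gcongr; linarith [exp_three_halves_lt_seven]
  have hL : (1 + K) * L ≤ (1 + K) * (d / c) := by
    gcongr; rwa [le_div_iff₀ hc, mul_comm]
  have hsplit : 3 / (2 * b) * ((4 + 2 * b * (1 + K) / (3 * c)) * d)
      = 6 / b * d + (1 + K) * (d / c) := by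
    field_simp; ring
  linarith

lemma one_sub_card_mul_le_measure_forall_le {Ω ι : Type*} [MeasurableSpace Ω] {μ : Measure Ω}
    [IsProbabilityMeasure μ] [Fintype ι] (f : ι → Ω → ℝ) (x : ℝ) {ε : ENNReal}
    (h : ∀ i, μ {ω | x ≤ f i ω} ≤ ε) :
    1 - Fintype.card ι * ε ≤ μ {ω | ∀ i, f i ω ≤ x} := by
  set U := ⋃ i, {ω | x ≤ f i ω}
  have hU : μ U ≤ Fintype.card ι * ε := calc
    μ U ≤ ∑ i, μ {ω | x ≤ f i ω} := measure_iUnion_fintype_le μ _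
    _ ≤ ∑ _i : ι, ε := sum_le_sum fun i _ => h i
    _ = Fintype.card ι * ε := by rw [sum_const, card_univ, nsmul_eq_mul]
  calc 1 - Fintype.card ι * ε ≤ μ Set.univ - μ U := by rw [measure_univ]; gcongr
    _ ≤ μ (Set.univ \ U) := le_measure_sdiff
    _ ≤ μ {ω | ∀ i, f i ω ≤ x} := measure_mono fun ω hω i => by
        simp only [U, Set.mem_sdiff, Set.mem_iUnion, Set.mem_ofPred_eq, not_exists, not_le] at hω
        exact (hω.2 i).le

theorem adjacency_bounded_row_sums_general
    {Ω : Type*} [MeasurableSpace Ω] (μ : Measure Ω) [IsProbabilityMeasure μ]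
    (n M : ℕ) (hM : 2 ≤ M)
    (T : Finset (Fin n) → Ω → Bool) (hTmeas : ∀ e, Measurable (T e))
    (hTindep : ProbabilityTheory.iIndepFun T μ)
    (p : Finset (Fin n) → ℝ)
    (hpT : ∀ e, μ {ω | T e ω = true} = ENNReal.ofReal (p e))
    (dm : ℕ → ℝ) (hdm : ∀ m, 0 ≤ dm m)
    (hpbound : ∀ e : Finset (Fin n), e.card ∈ Finset.Icc 2 M →
      p e ≤ dm e.card / (n.choose (e.card - 1)))
    (c K : ℝ) (hc : 0 < c) (hK : 0 < K)
    (hd : c * Real.log n ≤ ∑ m ∈ Finset.Icc 2 M, ((m : ℝ) - 1) * dm m) :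
    ENNReal.ofReal (1 - (n : ℝ) ^ (-K)) ≤
      μ {ω | ∀ i : Fin n, ∑ j, adjMatrix n M T ω i j ≤
        (4 + 2 * ((M : ℝ) - 1) * (1 + K) / (3 * c)) *
          ∑ m ∈ Finset.Icc 2 M, ((m : ℝ) - 1) * dm m} := by
  set d := ∑ m ∈ Icc 2 M, ((m : ℝ) - 1) * dm m with hd_def
  have hb : (0 : ℝ) < M - 1 := by
    have : (2 : ℝ) ≤ M := by exact_mod_cast hM
    linarith
  have hd0 : 0 ≤ d := sum_nonneg fun m hm =>
    mul_nonneg (sub_nonneg.2 (by exact_mod_cast (mem_Icc.1 hm).1.trans' one_le_two)) (hdm m)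
  have hq : ∀ i : Fin n, ∀ e ∈ incidentEdges M i,
      μ.real {ω | T e ω = true} ≤ dm e.card / (Fintype.card (Fin n)).choose (e.card - 1) :=
    fun i e he => by
      rw [measureReal_def, hpT, ENNReal.toReal_ofReal', Fintype.card_fin]
      exact max_le (hpbound e (mem_filter.1 he).2.1) (by have := hdm e.card; positivity)
  have row_tail : ∀ i : Fin n, μ {ω | (4 + 2 * ((M : ℝ) - 1) * (1 + K) / (3 * c)) * d ≤
      ∑ j, adjMatrix n M T ω i j} ≤ ENNReal.ofReal ((n : ℝ) ^ (-(1 + K))) := fun i => by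
    have hs : 0 ≤ 3 / (2 * ((M : ℝ) - 1)) := by positivity
    simp_rw [sum_adjMatrix_row]
    rw [← ofReal_measureReal, rpow_def_of_pos (by exact_mod_cast i.pos)]
    gcongr
    refine (hTindep.measureReal_sum_incidentEdges_ge_le hTmeas M i dm hdm (hq i) _ hs).trans ?_
    rw [show 3 / (2 * ((M : ℝ) - 1)) * ((M : ℝ) - 1) = 3 / 2 by field_simp, ← hd_def]
    gcongr
    linarith [chernoff_exponent_le (K := K) hb hc (by linarith) hd hd0]
  have hunion : (n : ℝ) * (n : ℝ) ^ (-(1 + K)) = (n : ℝ) ^ (-K) := by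
    rw [← rpow_one_add' (Nat.cast_nonneg n) (by linarith)]
    ring_nf
  refine le_trans ?_ (one_sub_card_mul_le_measure_forall_le _ _ row_tail)
  rw [Fintype.card_fin, ← ENNReal.ofReal_natCast, ← ENNReal.ofReal_mul (Nat.cast_nonneg n),
    hunion, ENNReal.ofReal_sub _ (by positivity), ENNReal.ofReal_one]

/-- Bounded row sums: if `d := Σ (m-1) d_m ≥ c log n`, then with probability at least
`1 - n^{-K}` every row sum of the adjacency matrix is at most `α₁·d`, where
`α₁ = 4 + 2(M-1)(1+K)/(3c)`. -/
theorem adjacency_bounded_row_sums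
    {Ω : Type*} [MeasurableSpace Ω] (μ : Measure Ω) [IsProbabilityMeasure μ]
    (n M : ℕ) (hn : 2 ≤ n) (hM : 2 ≤ M)
    (T : Finset (Fin n) → Ω → Bool) (hTmeas : ∀ e, Measurable (T e))
    (hTindep : ProbabilityTheory.iIndepFun T μ)
    (p : Finset (Fin n) → ℝ) (hp0 : ∀ e, 0 ≤ p e)
    (hpT : ∀ e, μ {ω | T e ω = true} = ENNReal.ofReal (p e))
    (dm : ℕ → ℝ) (hdm : ∀ m, 0 ≤ dm m)
    (hpbound : ∀ e : Finset (Fin n), e.card ∈ Finset.Icc 2 M →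
      p e ≤ dm e.card / (n.choose (e.card - 1)))
    (c K : ℝ) (hc : 0 < c) (hK : 0 < K)
    (hd : c * Real.log n ≤ ∑ m ∈ Finset.Icc 2 M, ((m : ℝ) - 1) * dm m) :
    ENNReal.ofReal (1 - (n : ℝ) ^ (-K)) ≤
      μ {ω | ∀ i : Fin n, ∑ j, adjMatrix n M T ω i j ≤
        (4 + 2 * ((M : ℝ) - 1) * (1 + K) / (3 * c)) *
          ∑ m ∈ Finset.Icc 2 M, ((m : ℝ) - 1) * dm m} :=
  adjacency_bounded_row_sums_general μ n M hM T hTmeas hTindep p hpT dm hdm hpbound c K hc hK hd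
end

section
/- Heavy-pair contribution of the expectation matrix: let n be a positive integer, d > 0 a real, and B ∈ ℝ^{n×n} a matrix with 0 ≤ B_{ij} ≤ d/n for all i, j. Then for every unit vector x ∈ ℝⁿ, | Σ_{(i,j) ∈ 𝓗(x)} B_{ij} x_i x_j | ≤ √d, where 𝓗(x) := { (i,j) ∈ {1,…,n}² : |x_i x_j| > √d/n } is the set of heavy pairs of x. -/
/-- Heavy-pair contribution of a matrix with entries in `[0, d/n]`: for every unit
vector `x`, the sum of `B_{ij} x_i x_j` over heavy pairs (`|x_i x_j| > √d/n`) is at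
most `√d` in absolute value. -/
theorem heavy_pairs_expectation_bound (n : ℕ) (hn : 0 < n) (d : ℝ) (hd : 0 < d)
    (B : Matrix (Fin n) (Fin n) ℝ) (hB : ∀ i j, 0 ≤ B i j ∧ B i j ≤ d / n)
    (x : Fin n → ℝ) (hx : ∑ i, (x i) ^ 2 = 1) :
    |∑ q ∈ Finset.univ.filter
        (fun q : Fin n × Fin n => Real.sqrt d / n < |x q.1 * x q.2|),
      B q.1 q.2 * x q.1 * x q.2| ≤ Real.sqrt d := by
  have hs : 0 < Real.sqrt d := Real.sqrt_pos.mpr hd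
  calc |∑ q ∈ Finset.univ.filter
        (fun q : Fin n × Fin n => Real.sqrt d / n < |x q.1 * x q.2|),
      B q.1 q.2 * x q.1 * x q.2|
      ≤ ∑ q ∈ Finset.univ.filter
        (fun q : Fin n × Fin n => Real.sqrt d / n < |x q.1 * x q.2|),
        |B q.1 q.2 * x q.1 * x q.2| := Finset.abs_sum_le_sum_abs _ _
    _ ≤ ∑ q ∈ Finset.univ.filter
        (fun q : Fin n × Fin n => Real.sqrt d / n < |x q.1 * x q.2|),
        Real.sqrt d * (x q.1 * x q.2) ^ 2 := by
        refine Finset.sum_le_sum fun q hq => ?_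
        simp only [Finset.mem_filter] at hq
        have hq' := hq.2
        have hB1 := (hB q.1 q.2).1
        have hB2 := (hB q.1 q.2).2
        have key : B q.1 q.2 ≤ Real.sqrt d * |x q.1 * x q.2| := by
          have : d / n = Real.sqrt d * (Real.sqrt d / n) := by
            rw [mul_div_assoc', Real.mul_self_sqrt hd.le]
          calc B q.1 q.2 ≤ d / n := hB2
            _ = Real.sqrt d * (Real.sqrt d / n) := this
            _ ≤ Real.sqrt d * |x q.1 * x q.2| :=
              mul_le_mul_of_nonneg_left hq'.le hs.le
        calc |B q.1 q.2 * x q.1 * x q.2| = B q.1 q.2 * |x q.1 * x q.2| := by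
              rw [mul_assoc, abs_mul, abs_of_nonneg hB1]
          _ ≤ (Real.sqrt d * |x q.1 * x q.2|) * |x q.1 * x q.2| :=
              mul_le_mul_of_nonneg_right key (abs_nonneg _)
          _ = Real.sqrt d * (x q.1 * x q.2) ^ 2 := by
              rw [mul_assoc, ← abs_mul, ← sq, abs_sq]
    _ ≤ ∑ q : Fin n × Fin n, Real.sqrt d * (x q.1 * x q.2) ^ 2 := by
        refine Finset.sum_le_sum_of_subset_of_nonneg (Finset.filter_subset _ _)
          fun q _ _ => mul_nonneg hs.le (sq_nonneg _)
    _ = Real.sqrt d := by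
        rw [← Finset.mul_sum]
        have : ∑ q : Fin n × Fin n, (x q.1 * x q.2) ^ 2
            = (∑ i, (x i) ^ 2) * (∑ j, (x j) ^ 2) := by
          rw [Finset.sum_mul_sum, ← Finset.sum_product']
          refine Finset.sum_congr rfl fun q _ => by ring
        rw [this, hx, one_mul, mul_one]
end

section
/- Counting inequality for split partitions: let m be a positive integer, let k ≥ 1, and let t_1,…,t_k and s_1,…,s_k be natural numbers with s_i ≤ t_i for every i. Set n := t_1 + … + t_k and s := s_1 + … + s_k. Then Σ_{i=1}^k [ C(t_i, m) − C(s_i, m) − C(t_i − s_i, m) ] ≤ C(n, m) − C(s, m) − C(n − s, m), where C(a,b) denotes the binomial coefficient (equal to 0 when b > a). -/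
/-!
Write `u = t - s`. By Vandermonde, `C(s + u, m) - C(s, m) - C(u, m)` is the sum of
`C(s, i) C(u, j)` over `i + j = m` with `i, j ≥ 1`, i.e. it counts the `m`-subsets meeting both
parts. Each such product is superadditive in `(s, u)`, because `C(·, i)` is superadditive for
`i ≥ 1` (again by Vandermonde). Summing over the blocks gives the inequality.
-/

open Finset

namespace Nat

/-- The number of `m`-subsets of a disjoint union of an `x`-set and a `y`-set meeting both. -/
def mixedChoose (m x y : ℕ) : ℕ :=
  ∑ p ∈ antidiagonal m with p.1 ≠ 0 ∧ p.2 ≠ 0, x.choose p.1 * y.choose p.2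

theorem add_choose_eq_add_mixedChoose {m : ℕ} (hm : m ≠ 0) (x y : ℕ) :
    (x + y).choose m = x.choose m + y.choose m + mixedChoose m x y := by
  have hboundary : {p ∈ antidiagonal m | ¬(p.1 ≠ 0 ∧ p.2 ≠ 0)} = {(m, 0), (0, m)} := by
    ext ⟨i, j⟩
    simp only [mem_filter, HasAntidiagonal.mem_antidiagonal, mem_insert, mem_singleton, Prod.mk.injEq]
    omega
  rw [add_choose_eq, ← sum_filter_not_add_sum_filter _ (fun p => p.1 ≠ 0 ∧ p.2 ≠ 0),
    hboundary, sum_pair (by simp [hm]), mixedChoose]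
  simp

theorem choose_add_choose_le_add_choose {i : ℕ} (hi : i ≠ 0) (a b : ℕ) :
    a.choose i + b.choose i ≤ (a + b).choose i :=
  (add_choose_eq_add_mixedChoose hi a b).symm ▸ le_add_right _ _

theorem mixedChoose_add_mixedChoose_le (m x₁ y₁ x₂ y₂ : ℕ) :
    mixedChoose m x₁ y₁ + mixedChoose m x₂ y₂ ≤ mixedChoose m (x₁ + x₂) (y₁ + y₂) := by
  rw [mixedChoose, mixedChoose, mixedChoose, ← sum_add_distrib]
  refine sum_le_sum fun p hp => ?_
  obtain ⟨hi, hj⟩ := (mem_filter.mp hp).2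
  calc x₁.choose p.1 * y₁.choose p.2 + x₂.choose p.1 * y₂.choose p.2
      ≤ (x₁.choose p.1 + x₂.choose p.1) * (y₁.choose p.2 + y₂.choose p.2) := by
        nlinarith [Nat.zero_le (x₁.choose p.1 * y₂.choose p.2),
          Nat.zero_le (x₂.choose p.1 * y₁.choose p.2)]
    _ ≤ (x₁ + x₂).choose p.1 * (y₁ + y₂).choose p.2 :=
        Nat.mul_le_mul (choose_add_choose_le_add_choose hi _ _)
          (choose_add_choose_le_add_choose hj _ _)

theorem sum_mixedChoose_le {ι : Type*} (m : ℕ) (A : Finset ι) (x y : ι → ℕ) :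
    ∑ l ∈ A, mixedChoose m (x l) (y l) ≤ mixedChoose m (∑ l ∈ A, x l) (∑ l ∈ A, y l) := by
  induction A using Finset.cons_induction with
  | empty => simp [mixedChoose]
  | cons a A ha ih =>
    rw [sum_cons, sum_cons, sum_cons]
    exact (Nat.add_le_add_left ih _).trans (mixedChoose_add_mixedChoose_le ..)

theorem choose_sub_choose_sub_choose_eq_mixedChoose {m a b : ℕ} (hm : m ≠ 0) (hba : b ≤ a) :
    (a.choose m : ℤ) - b.choose m - (a - b).choose m = mixedChoose m b (a - b) := by
  have h := add_choose_eq_add_mixedChoose hm b (a - b)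
  rw [Nat.add_sub_cancel' hba] at h
  rw [h]
  push_cast
  ring

end Nat

theorem split_partition_counting_general (m : ℕ) (hm : 1 ≤ m) (k : ℕ)
    (t s : Fin k → ℕ) (hst : ∀ i, s i ≤ t i) :
    ∑ i, (((t i).choose m : ℤ) - ((s i).choose m : ℤ) - (((t i - s i).choose m : ℤ))) ≤
      (((∑ i, t i).choose m : ℤ) - ((∑ i, s i).choose m : ℤ) -
        (((∑ i, t i) - (∑ i, s i)).choose m : ℤ)) := by
  have hm₀ : m ≠ 0 := Nat.one_le_iff_ne_zero.mp hm
  have hsum_sub : ∑ i, (t i - s i) = ∑ i, t i - ∑ i, s i :=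
    sum_tsub_distrib _ fun i _ => hst i
  rw [Nat.choose_sub_choose_sub_choose_eq_mixedChoose hm₀ (sum_le_sum fun i _ => hst i),
    ← hsum_sub]
  simp_rw [Nat.choose_sub_choose_sub_choose_eq_mixedChoose hm₀ (hst _)]
  exact_mod_cast Nat.sum_mixedChoose_le m univ s fun i => t i - s i

/-- Counting inequality for split partitions: if `sᵢ ≤ tᵢ`, `n = Σ tᵢ` and `s = Σ sᵢ`,
then `Σᵢ [C(tᵢ,m) - C(sᵢ,m) - C(tᵢ-sᵢ,m)] ≤ C(n,m) - C(s,m) - C(n-s,m)`. -/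
theorem split_partition_counting (m : ℕ) (hm : 1 ≤ m) (k : ℕ) (hk : 1 ≤ k)
    (t s : Fin k → ℕ) (hst : ∀ i, s i ≤ t i) :
    ∑ i, (((t i).choose m : ℤ) - ((s i).choose m : ℤ) - (((t i - s i).choose m : ℤ))) ≤
      (((∑ i, t i).choose m : ℤ) - ((∑ i, s i).choose m : ℤ) -
        (((∑ i, t i) - (∑ i, s i)).choose m : ℤ)) :=
  split_partition_counting_general m hm k t s hst
end
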